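/- arXiv:quant-ph/0608014 — 4 statements merged into one kernel-verified Lean document; each statement's English description precedes it below -/
import Mathlib

section
/- Let K = (I + iσ_x)/√2 and H the Hadamard matrix on C². Let ρ_y = (1/3)(|y⟩⟨y| + H|y⟩⟨y|H + K|y⟩⟨y|K†) for y ∈ {0,1}. Then ½(1 + ‖½ρ₀ − ½ρ₁‖₁) = ½ + 1/(2√3). -/
open Matrix
open scoped ComplexOrder

/-- The square root of a positive semidefinite matrix, as defined in Mathlib (Dec 2024). -/
noncomputable def Matrix.PosSemidef.sqrt {n : Type*} [Fintype n] [DecidableEq n]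
    {A : Matrix n n ℂ} (hA : A.PosSemidef) : Matrix n n ℂ :=
  (hA.1.eigenvectorUnitary : Matrix n n ℂ) *
    diagonal (((↑) : ℝ → ℂ) ∘ (√·) ∘ hA.1.eigenvalues) *
    (star hA.1.eigenvectorUnitary : Matrix n n ℂ)

/-- The trace norm `‖A‖₁ = Tr √(AᴴA)`. -/
noncomputable def traceNorm {ι : Type*} [Fintype ι] [DecidableEq ι]
    (A : Matrix ι ι ℂ) : ℝ :=
  ((Matrix.posSemidef_conjTranspose_mul_self A).sqrt.trace).re

/-- The Hadamard matrix `H = (σₓ + σ_z)/√2`. -/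
noncomputable def Had : Matrix (Fin 2) (Fin 2) ℂ :=
  ((Real.sqrt 2 : ℂ))⁻¹ • !![1, 1; 1, -1]

/-- `K = (I + i σₓ)/√2`. -/
noncomputable def Km : Matrix (Fin 2) (Fin 2) ℂ :=
  ((Real.sqrt 2 : ℂ))⁻¹ • (1 + Complex.I • !![0, 1; 1, 0])

/-- `ρ_y = (1/3)(|y⟩⟨y| + H|y⟩⟨y|H + K|y⟩⟨y|K†)`. -/
noncomputable def rho3 (y : Fin 2) : Matrix (Fin 2) (Fin 2) ℂ :=
  (1/3 : ℂ) • (Matrix.single y y 1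
    + Had * Matrix.single y y 1 * Had
    + Km * Matrix.single y y 1 * Kmᴴ)

/-! Up to the factor `1/6`, `½ρ₀ - ½ρ₁` is `σ_x + σ_y + σ_z`. The Pauli matrices are Hermitian,
square to `1` and pairwise anticommute, so this sum squares to `3`; hence `|½ρ₀ - ½ρ₁| = 1/(2√3)`
is scalar and its trace is `1/√3`. -/

lemma Matrix.IsHermitian.eigenvalues_eq_of_eq_smul_one {𝕜 n : Type*} [RCLike 𝕜] [Fintype n]
    [DecidableEq n] {A : Matrix n n 𝕜} (hA : A.IsHermitian) {r : ℝ} (h : A = (r : 𝕜) • 1)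
    (i : n) : hA.eigenvalues i = r := by
  subst h
  have hv := hA.mulVec_eigenvectorBasis i
  have hne : (hA.eigenvectorBasis i : n → 𝕜) ≠ 0 :=
    (WithLp.ofLp_eq_zero 2).ne.2 <| hA.eigenvectorBasis.orthonormal.ne_zero i
  rw [smul_mulVec, one_mulVec, RCLike.real_smul_eq_coe_smul (K := 𝕜)] at hv
  exact_mod_cast (smul_left_injective 𝕜 hne hv).symm

lemma Matrix.PosSemidef.sqrt_eq_smul_one {n : Type*} [Fintype n] [DecidableEq n]
    {A : Matrix n n ℂ} (hA : A.PosSemidef) {r : ℝ} (h : A = (r : ℂ) • 1) :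
    hA.sqrt = (√r : ℂ) • 1 := by
  have hdiag : diagonal (((↑) : ℝ → ℂ) ∘ (√·) ∘ hA.1.eigenvalues) = (√r : ℂ) • 1 := by
    ext i j
    simp [diagonal, one_apply, hA.1.eigenvalues_eq_of_eq_smul_one h]
  rw [PosSemidef.sqrt, hdiag, Matrix.mul_smul, Matrix.mul_one, Matrix.smul_mul,
    Unitary.mul_star_self_of_mem (SetLike.coe_mem _)]

lemma traceNorm_eq_of_conjTranspose_mul_self_eq_smul_one {ι : Type*} [Fintype ι] [DecidableEq ι]
    {A : Matrix ι ι ℂ} {r : ℝ} (h : Aᴴ * A = (r : ℂ) • 1) :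
    traceNorm A = Fintype.card ι * √r := by
  rw [traceNorm, PosSemidef.sqrt_eq_smul_one _ h, trace_smul, trace_one]
  simp [mul_comm]

/-- `σ_x + σ_y + σ_z`. -/
def pauliSum : Matrix (Fin 2) (Fin 2) ℂ :=
  !![1, 1 - Complex.I; 1 + Complex.I, -1]

lemma pauliSum_conjTranspose_mul_self : pauliSumᴴ * pauliSum = ((3 : ℝ) : ℂ) • 1 := by
  ext i j
  fin_cases i <;> fin_cases j <;>
    simp [pauliSum, Matrix.mul_apply, Fin.sum_univ_two, Complex.ext_iff] <;>
    norm_num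

lemma half_rho3_sub_half_rho3 :
    (1/2 : ℂ) • rho3 0 - (1/2 : ℂ) • rho3 1 = (6 : ℂ)⁻¹ • pauliSum := by
  have hsqrt2 : ((√2 : ℝ) : ℂ) ^ 2 = 2 := by norm_cast; simp
  have hsqrt2' : ((√2 : ℝ) : ℂ) ≠ 0 := by norm_cast; positivity
  have hsingle0 : Matrix.single (0 : Fin 2) 0 (1 : ℂ) = !![1, 0; 0, 0] := by
    ext i j; fin_cases i <;> fin_cases j <;> rfl
  have hsingle1 : Matrix.single (1 : Fin 2) 1 (1 : ℂ) = !![0, 0; 0, 1] := by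
    ext i j; fin_cases i <;> fin_cases j <;> rfl
  ext i j
  fin_cases i <;> fin_cases j <;>
    simp [rho3, Had, Km, pauliSum, hsingle0, hsingle1, Matrix.mul_apply, Fin.sum_univ_two,
      Matrix.one_apply] <;>
    field_simp <;> ring_nf <;> simp [hsqrt2, Complex.I_sq] <;> ring

lemma sqrt_one_div_twelve : √(1/12 : ℝ) = 1 / (2 * √3) := by
  rw [show (1/12 : ℝ) = (1 / (2 * √3)) ^ 2 by
      rw [div_pow, mul_pow, Real.sq_sqrt (by norm_num)]; norm_num,
    Real.sqrt_sq (by positivity)]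

/-- The Helstrom success probability for a bit encoded in a uniformly random
one of the three mutually unbiased bases `{I, H, K}` equals `½ + 1/(2√3)`. -/
theorem helstrom_three_mubs_one_qubit :
    (1/2 : ℝ) * (1 + traceNorm ((1/2 : ℂ) • rho3 0 - (1/2 : ℂ) • rho3 1))
      = 1/2 + 1/(2 * Real.sqrt 3) := by
  have hsq : ((6 : ℂ)⁻¹ • pauliSum)ᴴ * ((6 : ℂ)⁻¹ • pauliSum) = ((1/12 : ℝ) : ℂ) • 1 := by
    rw [conjTranspose_smul, Matrix.smul_mul, Matrix.mul_smul, pauliSum_conjTranspose_mul_self,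
      smul_smul, smul_smul]
    norm_num
  rw [half_rho3_sub_half_rho3, traceNorm_eq_of_conjTranspose_mul_self_eq_smul_one hsq,
    sqrt_one_div_twelve, Fintype.card_fin]
  ring
end

section
/- Let ρ_{y b}¹ = U_b|y⟩⟨y|U_b† for y ∈ {0,1}, b ∈ {+,×} be the single-qubit encodings with U_+ = I, U_× = H. Then the operator Q = 2·(½(1+1/√2))·I on C² satisfies Q ≥ ρ_{o₊ +}¹ + ρ_{o_× ×}¹ in the Loewner order for all o₊, o_× ∈ {0,1}. -/
open Matrix
open scoped ComplexOrder

/-- Single-qubit encodings `ρ_{y b} = U_b|y⟩⟨y|U_b†` with `U_+ = I`, `U_× = H`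
(`b = 0` is the `+` basis, `b = 1` the `×` basis). -/
noncomputable def rhoQ (y : Fin 2) (b : Fin 2) : Matrix (Fin 2) (Fin 2) ℂ :=
  if b = 0 then Matrix.single y y 1
  else Had * Matrix.single y y 1 * Hadᴴ

noncomputable def xm : ℝ := Real.sqrt ((Real.sqrt 2 - 1)/2)
noncomputable def xp : ℝ := Real.sqrt ((Real.sqrt 2 + 1)/2)

lemma s2 : Real.sqrt 2 ^ 2 = 2 := Real.sq_sqrt (by norm_num)
lemma s2_ge : (1:ℝ) ≤ Real.sqrt 2 := by nlinarith [s2, Real.sqrt_nonneg 2]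
lemma hxm : xm ^ 2 = (Real.sqrt 2 - 1)/2 := Real.sq_sqrt (by nlinarith [s2_ge])
lemma hxp : xp ^ 2 = (Real.sqrt 2 + 1)/2 := Real.sq_sqrt (by nlinarith [s2_ge])
lemma hxmxp : xm * xp = 1/2 := by
  rw [xm, xp, ← Real.sqrt_mul (by nlinarith [s2_ge])]
  rw [show (Real.sqrt 2 - 1)/2 * ((Real.sqrt 2 + 1)/2) = (Real.sqrt 2 ^2 - 1)/4 by ring, s2]
  rw [show ((2:ℝ)-1)/4 = (1/2)^2 by norm_num, Real.sqrt_sq (by norm_num)]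

lemma hxm' : xm * xm = (Real.sqrt 2 - 1)/2 := by rw [← sq]; exact hxm
lemma hxp' : xp * xp = (Real.sqrt 2 + 1)/2 := by rw [← sq]; exact hxp
lemma hxpxm : xp * xm = 1/2 := by rw [mul_comm]; exact hxmxp
lemma s2' : Real.sqrt 2 * Real.sqrt 2 = 2 := by nlinarith [s2]

set_option maxHeartbeats 1000000 in
lemma psd_of_eq {M : Matrix (Fin 2) (Fin 2) ℂ} (B : Matrix (Fin 2) (Fin 2) ℂ)
    (h : M = Bᴴ * B) : M.PosSemidef := h ▸ posSemidef_conjTranspose_mul_self B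

set_option maxHeartbeats 1000000 in
/-- Dual SDP feasibility for PI₀-STAR(XOR), two bases: the operator
`Q = 2·(½(1 + 1/√2))·I` on `ℂ²` dominates `ρ_{o₊ +} + ρ_{o_× ×}` for all
`o₊, o_× ∈ {0,1}` in the Loewner order. -/
theorem dual_feasible_xor_two_bases :
    ∀ op ot : Fin 2,
      (((2 * ((1/2) * (1 + (Real.sqrt 2)⁻¹)) : ℝ) : ℂ) • (1 : Matrix (Fin 2) (Fin 2) ℂ)
        - (rhoQ op 0 + rhoQ ot 1)).PosSemidef := by
  intro op ot
  fin_cases op <;> fin_cases ot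
  · refine psd_of_eq !![(xm:ℂ), -(xp:ℂ); 0, 0] ?_
    ext i j
    fin_cases i <;> fin_cases j <;>
      · simp [rhoQ, Had, Matrix.mul_apply, Fin.sum_univ_two, Matrix.single,
          Matrix.one_apply, Matrix.conjTranspose_apply, Matrix.vecMul, Matrix.vecHead,
          Matrix.vecTail, dotProduct, Matrix.smul_apply, Function.comp]
        field_simp
        norm_cast <;> simp only [hxm', hxp', hxmxp, hxpxm, s2', s2, hxm, hxp, mul_assoc] <;> nlinarith [s2', s2, hxmxp]
  · refine psd_of_eq !![(xm:ℂ), (xp:ℂ); 0, 0] ?_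
    ext i j
    fin_cases i <;> fin_cases j <;>
      · simp [rhoQ, Had, Matrix.mul_apply, Fin.sum_univ_two, Matrix.single,
          Matrix.one_apply, Matrix.conjTranspose_apply, Matrix.vecMul, Matrix.vecHead,
          Matrix.vecTail, dotProduct, Matrix.smul_apply, Function.comp]
        field_simp
        norm_cast <;> simp only [hxm', hxp', hxmxp, hxpxm, s2', s2, hxm, hxp, mul_assoc] <;> nlinarith [s2', s2, hxmxp]
  · refine psd_of_eq !![(xp:ℂ), -(xm:ℂ); 0, 0] ?_
    ext i j
    fin_cases i <;> fin_cases j <;>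
      · simp [rhoQ, Had, Matrix.mul_apply, Fin.sum_univ_two, Matrix.single,
          Matrix.one_apply, Matrix.conjTranspose_apply, Matrix.vecMul, Matrix.vecHead,
          Matrix.vecTail, dotProduct, Matrix.smul_apply, Function.comp]
        field_simp
        norm_cast <;> simp only [hxm', hxp', hxmxp, hxpxm, s2', s2, hxm, hxp, mul_assoc] <;> nlinarith [s2', s2, hxmxp]
  · refine psd_of_eq !![(xp:ℂ), (xm:ℂ); 0, 0] ?_
    ext i j
    fin_cases i <;> fin_cases j <;>
      · simp [rhoQ, Had, Matrix.mul_apply, Fin.sum_univ_two, Matrix.single,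
          Matrix.one_apply, Matrix.conjTranspose_apply, Matrix.vecMul, Matrix.vecHead,
          Matrix.vecTail, dotProduct, Matrix.smul_apply, Function.comp]
        field_simp
        norm_cast <;> simp only [hxm', hxp', hxmxp, hxpxm, s2', s2, hxm, hxp, mul_assoc] <;> nlinarith [s2', s2, hxmxp]
end

section
/- Let P₀ and P₁ be orthogonal projections on C^d. Then there exists an orthogonal decomposition C^d = ⊕_{i=1}^m H_i with dim H_i ≤ 2 for all i, such that each H_i is invariant under both P₀ and P₁ (equivalently, P₀ = Σ_i Π_i P₀ Π_i and P₁ = Σ_i Π_i P₁ Π_i where Π_i projects onto H_i). -/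
/-!
Halmos' trick: for idempotents `p` and `q` the operator `(p - q) ^ 2` commutes with `p`, so a
nonzero invariant subspace `V` contains a common eigenvector `v` of `p` and `(p - q) ^ 2`.
Expanding `(p - q) ^ 2 v = ν v` shows that `span {v, q v}` is invariant under both projections.
Since the projections are self-adjoint, the orthogonal complement of this subspace inside `V` is
again invariant, and induction on the dimension splits the whole space into such pieces.
-/

open Module Submodule
open scoped Function

theorem IsIdempotentElem.sub_sq {R : Type*} [Ring R] {p q : R}
    (hp : IsIdempotentElem p) (hq : IsIdempotentElem q) :
    (p - q) ^ 2 = p - p * q - q * p + q := by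
  rw [sq, sub_mul, mul_sub, mul_sub, hp.eq, hq.eq]
  abel

theorem IsIdempotentElem.commute_sub_sq {R : Type*} [Ring R] {p q : R}
    (hp : IsIdempotentElem p) (hq : IsIdempotentElem q) : Commute p ((p - q) ^ 2) := by
  have hpq : p * (p * q) = p * q := by rw [← mul_assoc, hp.eq]
  rw [Commute, SemiconjBy, hp.sub_sq hq]
  simp only [mul_add, mul_sub, add_mul, sub_mul, mul_assoc, hp.eq, hpq]
  abel

theorem Pairwise.fin_cons {α : Type*} {r : α → α → Prop} (hr : ∀ x y, r x y → r y x) {n : ℕ}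
    {a : α} {f : Fin n → α} (ha : ∀ i, r a (f i)) (hf : Pairwise (r on f)) :
    Pairwise (r on (Fin.cons a f : Fin (n + 1) → α)) := by
  intro i j hij
  cases i using Fin.cases <;> cases j using Fin.cases
  · exact absurd rfl hij
  · exact ha _
  · exact hr _ _ (ha _)
  · exact hf fun h ↦ hij (congrArg Fin.succ h)

theorem iSup_fin_cons {α : Type*} [CompleteLattice α] {n : ℕ} (a : α) (f : Fin n → α) :
    ⨆ i, (Fin.cons a f : Fin (n + 1) → α) i = a ⊔ ⨆ i, f i := by
  rw [← sSup_range, Fin.range_cons, sSup_insert, sSup_range]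

namespace Module.End

variable {K E : Type*} [Field K] [AddCommGroup E] [Module K E]

theorem span_mem_invtSubmodule_iff {f : End K E} {s : Set E} :
    span K s ∈ f.invtSubmodule ↔ ∀ x ∈ s, f x ∈ span K s := by
  rw [mem_invtSubmodule, span_le]
  rfl

theorem span_pair_mem_invtSubmodule_of_isIdempotentElem {q : End K E} (hq : IsIdempotentElem q)
    (v : E) : span K {v, q v} ∈ q.invtSubmodule := by
  rw [span_mem_invtSubmodule_iff]
  rintro x (rfl | rfl)
  · exact subset_span (by simp)
  · rw [← mul_apply, hq.eq]
    exact subset_span (by simp)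

theorem span_pair_mem_invtSubmodule {p q : End K E} (hp : IsIdempotentElem p)
    (hq : IsIdempotentElem q) {μ ν : K} {v : E} (hpv : p v = μ • v)
    (hv : ((p - q) ^ 2) v = ν • v) : span K {v, q v} ∈ p.invtSubmodule := by
  rw [hp.sub_sq hq] at hv
  simp only [LinearMap.add_apply, LinearMap.sub_apply, mul_apply, hpv, map_smul] at hv
  rw [span_mem_invtSubmodule_iff]
  rintro x (rfl | rfl) <;> rw [mem_span_pair]
  · exact ⟨μ, 0, by simp [hpv]⟩
  · exact ⟨μ - ν, 1 - μ, by linear_combination (norm := module) hv⟩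

variable [IsAlgClosed K] [FiniteDimensional K E]

theorem exists_hasEigenvector_of_mem_invtSubmodule {f : End K E} {V : Submodule K E}
    (hV : V ∈ f.invtSubmodule) (hV₀ : V ≠ ⊥) : ∃ μ, ∃ v ∈ V, f.HasEigenvector μ v := by
  have : Nontrivial V := nontrivial_iff_ne_bot.mpr hV₀
  obtain ⟨μ, hμ⟩ := exists_eigenvalue (f.restrict hV)
  obtain ⟨v, hv⟩ := hμ.exists_hasEigenvector
  refine ⟨μ, v, v.2, ?_, by simpa using hv.2⟩
  rw [mem_eigenspace_iff]
  exact congrArg Subtype.val hv.apply_eq_smul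

theorem exists_hasEigenvector_hasEigenvector_of_commute {f g : End K E} (hfg : Commute f g)
    {V : Submodule K E} (hVf : V ∈ f.invtSubmodule) (hVg : V ∈ g.invtSubmodule) (hV₀ : V ≠ ⊥) :
    ∃ μ ν, ∃ v ∈ V, f.HasEigenvector μ v ∧ g.HasEigenvector ν v := by
  obtain ⟨μ, v₀, hv₀V, hv₀⟩ := exists_hasEigenvector_of_mem_invtSubmodule hVf hV₀
  have hU : V ⊓ f.eigenspace μ ∈ g.invtSubmodule :=
    invtSubmodule.inf_mem hVg (mapsTo_genEigenspace_of_comm hfg μ 1)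
  have hU₀ : V ⊓ f.eigenspace μ ≠ ⊥ :=
    (Submodule.ne_bot_iff _).mpr ⟨v₀, ⟨hv₀V, hv₀.1⟩, hv₀.2⟩
  obtain ⟨ν, v, ⟨hvV, hvμ⟩, hv⟩ := exists_hasEigenvector_of_mem_invtSubmodule hU hU₀
  exact ⟨μ, ν, v, hvV, ⟨hvμ, hv.2⟩, hv⟩

theorem exists_finrank_le_two_mem_invtSubmodule {p q : End K E} (hp : IsIdempotentElem p)
    (hq : IsIdempotentElem q) {V : Submodule K E} (hVp : V ∈ p.invtSubmodule)
    (hVq : V ∈ q.invtSubmodule) (hV₀ : V ≠ ⊥) :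
    ∃ W ≤ V, W ≠ ⊥ ∧ finrank K W ≤ 2 ∧ W ∈ p.invtSubmodule ∧ W ∈ q.invtSubmodule := by
  have hVpq : V ∈ ((p - q) ^ 2).invtSubmodule := by
    have h : V ∈ (p - q).invtSubmodule := fun x hx ↦ by
      simpa using (sub_mem (hVp hx) (hVq hx) : p x - q x ∈ V)
    exact fun x hx ↦ h (h hx)
  obtain ⟨μ, ν, v, hvV, hpv, hv⟩ :=
    exists_hasEigenvector_hasEigenvector_of_commute (hp.commute_sub_sq hq) hVp hVpq hV₀
  refine ⟨span K {v, q v}, ?_, ?_, ?_,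
    span_pair_mem_invtSubmodule hp hq hpv.apply_eq_smul hv.apply_eq_smul,
    span_pair_mem_invtSubmodule_of_isIdempotentElem hq v⟩
  · rw [span_le]
    rintro x (rfl | rfl)
    exacts [hvV, hVq hvV]
  · exact fun h ↦ hpv.2 (span_eq_bot.mp h v (by simp))
  · classical
    have h := finrank_span_finset_le_card (R := K) ({v, q v} : Finset E)
    rw [Finset.coe_pair] at h
    exact h.trans Finset.card_le_two

end Module.End

section Decomposition

variable {E : Type*} [NormedAddCommGroup E] [InnerProductSpace ℂ E] [FiniteDimensional ℂ E]

open Module.End in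
theorem LinearMap.IsSymmetricProjection.exists_orthogonal_decomposition {p q : Module.End ℂ E}
    (hp : p.IsSymmetricProjection) (hq : q.IsSymmetricProjection) (V : Submodule ℂ E)
    (hVp : V ∈ p.invtSubmodule) (hVq : V ∈ q.invtSubmodule) :
    ∃ (m : ℕ) (H : Fin m → Submodule ℂ E),
      (∀ i, finrank ℂ (H i) ≤ 2 ∧ H i ∈ p.invtSubmodule ∧ H i ∈ q.invtSubmodule) ∧
      Pairwise ((· ⟂ ·) on H) ∧ ⨆ i, H i = V := by
  induction hn : finrank ℂ V using Nat.strong_induction_on generalizing V with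
  | _ n ih =>
  by_cases hV₀ : V = ⊥
  · exact ⟨0, Fin.elim0, fun i ↦ i.elim0, fun i ↦ i.elim0, by simp [hV₀]⟩
  obtain ⟨W, hWV, hW₀, hW2, hWp, hWq⟩ :=
    exists_finrank_le_two_mem_invtSubmodule hp.isIdempotentElem hq.isIdempotentElem hVp hVq hV₀
  have hrest : finrank ℂ (Wᗮ ⊓ V : Submodule ℂ E) < n := by
    have hW : 1 ≤ finrank ℂ W := one_le_finrank_iff.mpr hW₀
    have := finrank_add_inf_finrank_orthogonal hWV
    omega
  obtain ⟨m, H, hH, hHorth, hHV⟩ := ih _ hrest (Wᗮ ⊓ V)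
    (invtSubmodule.inf_mem (hp.isSymmetric.orthogonalComplement_mem_invtSubmodule hWp) hVp)
    (invtSubmodule.inf_mem (hq.isSymmetric.orthogonalComplement_mem_invtSubmodule hWq) hVq) rfl
  have hWH (i : Fin m) : W ⟂ H i :=
    (isOrtho_iff_le.mpr ((le_iSup H i).trans (hHV ▸ inf_le_left))).symm
  refine ⟨m + 1, Fin.cons W H, Fin.cases ⟨hW2, hWp, hWq⟩ hH,
    Pairwise.fin_cons (fun _ _ ↦ IsOrtho.symm) hWH hHorth, ?_⟩
  rw [iSup_fin_cons, hHV, sup_orthogonal_inf_of_hasOrthogonalProjection hWV]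

end Decomposition

namespace Submodule

variable {𝕜 E : Type*} [RCLike 𝕜] [NormedAddCommGroup E] [InnerProductSpace 𝕜 E]

theorem starProjection_mul_mul_starProjection_of_mem_invtSubmodule {T : E →L[𝕜] E}
    {K : Submodule 𝕜 E} [K.HasOrthogonalProjection]
    (hK : K ∈ End.invtSubmodule (T : E →ₗ[𝕜] E)) :
    K.starProjection * T * K.starProjection = T * K.starProjection := by
  ext x
  exact starProjection_eq_self_iff.mpr (hK (K.starProjection_apply_mem x))

variable {ι : Type*} [Fintype ι] {H : ι → Submodule 𝕜 E} [∀ i, CompleteSpace (H i)]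

theorem sum_starProjection_eq_one (horth : Pairwise ((· ⟂ ·) on H)) (htop : ⨆ i, H i = ⊤) :
    ∑ i, (H i).starProjection = 1 := by
  ext x
  rw [sum_apply]
  exact (OrthogonalFamily.of_pairwise horth).sum_projection_of_mem_iSup x (htop ▸ mem_top)

theorem sum_starProjection_mul_mul_starProjection (horth : Pairwise ((· ⟂ ·) on H))
    (htop : ⨆ i, H i = ⊤) {T : E →L[𝕜] E} (hT : ∀ i, H i ∈ End.invtSubmodule (T : E →ₗ[𝕜] E)) :
    ∑ i, (H i).starProjection * T * (H i).starProjection = T := by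
  simp only [starProjection_mul_mul_starProjection_of_mem_invtSubmodule (hT _), ← Finset.mul_sum,
    sum_starProjection_eq_one horth htop, mul_one]

end Submodule

theorem Matrix.rank_toEuclideanCLM_symm {𝕜 n : Type*} [RCLike 𝕜] [Fintype n] [DecidableEq n]
    (T : EuclideanSpace 𝕜 n →L[𝕜] EuclideanSpace 𝕜 n) :
    ((toEuclideanCLM (n := n) (𝕜 := 𝕜)).symm T).rank = finrank 𝕜 T.range := by
  rw [rank_eq_finrank_range_toLin _ (EuclideanSpace.basisFun n 𝕜).toBasis
      (EuclideanSpace.basisFun n 𝕜).toBasis, ← toEuclideanLin_eq_toLin_orthonormal,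
    ← coe_toEuclideanCLM_eq_toEuclideanLin, StarAlgEquiv.apply_symm_apply]

theorem Matrix.isStarProjection_toEuclideanCLM_symm {𝕜 n : Type*} [RCLike 𝕜] [Fintype n]
    [DecidableEq n] {T : EuclideanSpace 𝕜 n →L[𝕜] EuclideanSpace 𝕜 n} (hT : IsStarProjection T) :
    IsStarProjection ((toEuclideanCLM (n := n) (𝕜 := 𝕜)).symm T) := by
  let Φ := toEuclideanCLM (n := n) (𝕜 := 𝕜)
  refine ⟨EquivLike.injective Φ ?_, EquivLike.injective Φ ?_⟩
  · rw [map_mul, Φ.apply_symm_apply]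
    exact hT.isIdempotentElem
  · rw [map_star, Φ.apply_symm_apply]
    exact hT.isSelfAdjoint

open Matrix

/-- Halmos two-projections decomposition: for orthogonal projections `P₀, P₁`
on `ℂ^d` there is a decomposition of the space into mutually orthogonal
subspaces of dimension at most 2, each invariant under both projections. -/
theorem two_projections_decomposition {d : ℕ}
    (P₀ P₁ : Matrix (Fin d) (Fin d) ℂ)
    (hP₀ : P₀ᴴ = P₀) (hP₀2 : P₀ * P₀ = P₀)
    (hP₁ : P₁ᴴ = P₁) (hP₁2 : P₁ * P₁ = P₁) :
    ∃ (m : ℕ) (Pj : Fin m → Matrix (Fin d) (Fin d) ℂ),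
      (∀ i, (Pj i)ᴴ = Pj i ∧ Pj i * Pj i = Pj i ∧ (Pj i).rank ≤ 2) ∧
      (∀ i j, i ≠ j → Pj i * Pj j = 0) ∧
      (∑ i, Pj i) = 1 ∧
      P₀ = ∑ i, Pj i * P₀ * Pj i ∧
      P₁ = ∑ i, Pj i * P₁ * Pj i := by
  let Φ := toEuclideanCLM (n := Fin d) (𝕜 := ℂ)
  have hp : IsStarProjection (Φ P₀) := IsStarProjection.map ⟨hP₀2, hP₀⟩ Φ
  have hq : IsStarProjection (Φ P₁) := IsStarProjection.map ⟨hP₁2, hP₁⟩ Φ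
  obtain ⟨m, H, hH, horth, htop⟩ :=
    (ContinuousLinearMap.IsStarProjection.isSymmetricProjection hp).exists_orthogonal_decomposition
      (ContinuousLinearMap.IsStarProjection.isSymmetricProjection hq) ⊤
      (End.invtSubmodule.top_mem _) (End.invtSubmodule.top_mem _)
  let Pj (i : Fin m) := Φ.symm (H i).starProjection
  have hΦPj (i : Fin m) : Φ (Pj i) = (H i).starProjection := Φ.apply_symm_apply _
  have hPj (i : Fin m) : IsStarProjection (Pj i) :=
    isStarProjection_toEuclideanCLM_symm isStarProjection_starProjection
  refine ⟨m, Pj, fun i ↦ ⟨(hPj i).isSelfAdjoint, (hPj i).isIdempotentElem, ?_⟩,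
    fun i j hij ↦ EquivLike.injective Φ ?_, EquivLike.injective Φ ?_,
    EquivLike.injective Φ ?_, EquivLike.injective Φ ?_⟩
  · rw [rank_toEuclideanCLM_symm, range_starProjection]
    exact (hH i).1
  · rw [map_mul, hΦPj, hΦPj, map_zero]
    exact (horth hij).starProjection_comp_starProjection
  · rw [map_sum, map_one]
    simp only [hΦPj]
    exact sum_starProjection_eq_one horth htop
  all_goals
    rw [map_sum]
    simp only [map_mul, hΦPj]
  · exact (sum_starProjection_mul_mul_starProjection horth htop fun i ↦ (hH i).2.1).symm
  · exact (sum_starProjection_mul_mul_starProjection horth htop fun i ↦ (hH i).2.2).symm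
end

section
/- Let m ≥ 2, and for b ∈ [m], o_b ∈ Y let P_{o_b b} be rank-k orthogonal projections on C^{|X|} (k = |X|/|Y|) with Σ_{o ∈ Y} P_{o b} = I for each b, and Tr(P_{o b} P_{o' b'}) = k²/|X| for all b ≠ b'. Then S := Σ_{o₁,…,o_m ∈ Y} (Σ_b P_{o_b b})³ = [m|Y|^{m−1} + 3m(m−1)|Y|^{m−2} + m(m−1)(m−2)|Y|^{m−3}[m≥3]] · I. -/
open Matrix

section Aux

variable {Y M : Type*} [Fintype Y] [AddCommMonoid M]

lemma card_ne_aux {ι : Type*} [Fintype ι] [DecidableEq ι] (j : ι) :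
    Fintype.card {i // i ≠ j} = Fintype.card ι - 1 := by
  have := Fintype.card_subtype_compl (fun i : ι => i = j)
  simpa [Fintype.card_subtype_eq] using this

lemma sum_eval1 {ι : Type*} [Fintype ι] [DecidableEq ι] (j : ι) (G : Y → M) :
    ∑ o : ι → Y, G (o j)
      = (Fintype.card Y ^ (Fintype.card ι - 1)) • ∑ y, G y := by
  calc ∑ o : ι → Y, G (o j)
      = ∑ p : Y × ({ i // i ≠ j } → Y), G p.1 :=
        Fintype.sum_equiv (Equiv.funSplitAt j Y) _ _ (fun o => rfl)
    _ = ∑ y : Y, ∑ _r : { i // i ≠ j } → Y, G y := by rw [Fintype.sum_prod_type]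
    _ = ∑ y : Y, (Fintype.card ({ i // i ≠ j } → Y)) • G y := by
        simp [Finset.sum_const]
    _ = _ := by
        rw [← Finset.smul_sum]
        congr 1
        simp [Fintype.card_fun, card_ne_aux]

lemma sum_eval2 {ι : Type*} [Fintype ι] [DecidableEq ι] {j1 j2 : ι} (h : j1 ≠ j2)
    (G : Y → Y → M) :
    ∑ o : ι → Y, G (o j1) (o j2)
      = (Fintype.card Y ^ (Fintype.card ι - 2)) • ∑ y1, ∑ y2, G y1 y2 := by
  calc ∑ o : ι → Y, G (o j1) (o j2)
      = ∑ p : Y × ({ i // i ≠ j1 } → Y), G p.1 (p.2 ⟨j2, Ne.symm h⟩) :=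
        Fintype.sum_equiv (Equiv.funSplitAt j1 Y) _ _ (fun o => rfl)
    _ = ∑ y : Y, ∑ r : { i // i ≠ j1 } → Y, G y (r ⟨j2, Ne.symm h⟩) :=
        by rw [Fintype.sum_prod_type]
    _ = ∑ y : Y, (Fintype.card Y ^ (Fintype.card { i // i ≠ j1 } - 1)) •
          ∑ y2, G y y2 := by
        refine Finset.sum_congr rfl fun y _ => ?_
        exact sum_eval1 _ _
    _ = _ := by
        rw [← Finset.smul_sum]
        congr 2
        rw [card_ne_aux]
        omega

lemma sum_eval3 {ι : Type*} [Fintype ι] [DecidableEq ι] {j1 j2 j3 : ι}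
    (h12 : j1 ≠ j2) (h13 : j1 ≠ j3) (h23 : j2 ≠ j3) (G : Y → Y → Y → M) :
    ∑ o : ι → Y, G (o j1) (o j2) (o j3)
      = (Fintype.card Y ^ (Fintype.card ι - 3)) • ∑ y1, ∑ y2, ∑ y3, G y1 y2 y3 := by
  have hne : (⟨j2, Ne.symm h12⟩ : { i // i ≠ j1 }) ≠ ⟨j3, Ne.symm h13⟩ := by
    intro he
    exact h23 (congrArg Subtype.val he)
  calc ∑ o : ι → Y, G (o j1) (o j2) (o j3)
      = ∑ p : Y × ({ i // i ≠ j1 } → Y),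
          G p.1 (p.2 ⟨j2, Ne.symm h12⟩) (p.2 ⟨j3, Ne.symm h13⟩) :=
        Fintype.sum_equiv (Equiv.funSplitAt j1 Y) _ _ (fun o => rfl)
    _ = ∑ y : Y, ∑ r : { i // i ≠ j1 } → Y,
          G y (r ⟨j2, Ne.symm h12⟩) (r ⟨j3, Ne.symm h13⟩) := by rw [Fintype.sum_prod_type]
    _ = ∑ y : Y, (Fintype.card Y ^ (Fintype.card { i // i ≠ j1 } - 2)) •
          ∑ y2, ∑ y3, G y y2 y3 := by
        refine Finset.sum_congr rfl fun y _ => ?_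
        exact sum_eval2 hne _
    _ = _ := by
        rw [← Finset.smul_sum]
        congr 2
        rw [card_ne_aux]
        omega

end Aux

/-- For rank-`k` projections `P_{o b}` coming from a balanced function encoded
in `m` mutually unbiased bases, the square-root-measurement normalization
operator `S = Σ_{o₁,…,o_m} (Σ_b P_{o_b b})³` is the stated multiple of the
identity. -/
theorem sqrt_measurement_normalization
    {X Y : Type*} [Fintype X] [DecidableEq X] [Fintype Y] [DecidableEq Y]
    {m k : ℕ} (hm : 2 ≤ m) (hk : k * Fintype.card Y = Fintype.card X)
    (P : Fin m → Y → Matrix X X ℂ)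
    (hherm : ∀ b o, (P b o)ᴴ = P b o)
    (hidem : ∀ b o, P b o * P b o = P b o)
    (hrank : ∀ b o, (P b o).rank = k)
    (hsum : ∀ b, (∑ o, P b o) = 1)
    (htr : ∀ b b', b ≠ b' → ∀ o o',
      (P b o * P b' o').trace = (k ^ 2 : ℂ) / (Fintype.card X : ℂ)) :
    (∑ o : Fin m → Y, (∑ b, P b (o b)) ^ 3)
      = (((m * Fintype.card Y ^ (m - 1)
          + 3 * m * (m - 1) * Fintype.card Y ^ (m - 2)
          + m * (m - 1) * (m - 2) * Fintype.card Y ^ (m - 3)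
              * (if 3 ≤ m then 1 else 0) : ℕ) : ℂ))
        • (1 : Matrix X X ℂ) := by
  classical
  set T : Fin m → Fin m → Fin m → Matrix X X ℂ :=
    fun b1 b2 b3 => ∑ o : Fin m → Y, P b1 (o b1) * P b2 (o b2) * P b3 (o b3)
    with hT
  -- value of T in each case
  have hcard : Fintype.card (Fin m) = m := Fintype.card_fin m
  have h111 : ∀ b : Fin m, T b b b = (Fintype.card Y ^ (m - 1)) • (1 : Matrix X X ℂ) := by
    intro b
    have := sum_eval1 (Y := Y) b (fun y => P b y * P b y * P b y)
    simp only [hT]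
    simp only [hcard] at this
    rw [this]
    simp only [hidem, hsum]
  have h112 : ∀ b1 b3 : Fin m, b1 ≠ b3 →
      T b1 b1 b3 = (Fintype.card Y ^ (m - 2)) • (1 : Matrix X X ℂ) := by
    intro b1 b3 h
    have := sum_eval2 (Y := Y) h (fun y1 y2 => P b1 y1 * P b1 y1 * P b3 y2)
    simp only [hT]
    simp only [hcard] at this
    rw [this]
    simp only [hidem]
    rw [← Finset.sum_mul_sum, hsum, hsum, one_mul]
  have h121 : ∀ b1 b2 : Fin m, b1 ≠ b2 →
      T b1 b2 b1 = (Fintype.card Y ^ (m - 2)) • (1 : Matrix X X ℂ) := by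
    intro b1 b2 h
    have := sum_eval2 (Y := Y) h (fun y1 y2 => P b1 y1 * P b2 y2 * P b1 y1)
    simp only [hT]
    simp only [hcard] at this
    rw [this]
    simp_rw [← Finset.sum_mul, ← Finset.mul_sum, hsum, mul_one, hidem, hsum]
  have h122 : ∀ b1 b2 : Fin m, b1 ≠ b2 →
      T b1 b2 b2 = (Fintype.card Y ^ (m - 2)) • (1 : Matrix X X ℂ) := by
    intro b1 b2 h
    have := sum_eval2 (Y := Y) h (fun y1 y2 => P b1 y1 * P b2 y2 * P b2 y2)
    simp only [hT]
    simp only [hcard] at this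
    rw [this]
    simp only [mul_assoc, hidem]
    rw [← Finset.sum_mul_sum, hsum, hsum, one_mul]
  have h123 : ∀ b1 b2 b3 : Fin m, b1 ≠ b2 → b1 ≠ b3 → b2 ≠ b3 →
      T b1 b2 b3 = (Fintype.card Y ^ (m - 3)) • (1 : Matrix X X ℂ) := by
    intro b1 b2 b3 h12 h13 h23
    have := sum_eval3 (Y := Y) h12 h13 h23
      (fun y1 y2 y3 => P b1 y1 * P b2 y2 * P b3 y3)
    simp only [hT]
    simp only [hcard] at this
    rw [this]
    simp_rw [mul_assoc, ← Finset.mul_sum, ← Finset.sum_mul, hsum, one_mul]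
  -- expand the cube
  have expand : ∀ o : Fin m → Y,
      (∑ b, P b (o b)) ^ 3
        = ∑ b1, ∑ b2, ∑ b3, P b1 (o b1) * P b2 (o b2) * P b3 (o b3) := by
    intro o
    rw [pow_three']
    simp_rw [Finset.sum_mul_sum, Finset.sum_mul]
    exact Finset.sum_congr rfl fun b1 _ => Finset.sum_comm
  calc (∑ o : Fin m → Y, (∑ b, P b (o b)) ^ 3)
      = ∑ o : Fin m → Y, ∑ b1, ∑ b2, ∑ b3,
          P b1 (o b1) * P b2 (o b2) * P b3 (o b3) := by
        exact Finset.sum_congr rfl fun o _ => expand o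
    _ = ∑ b1, ∑ b2, ∑ b3, T b1 b2 b3 := by
        rw [Finset.sum_comm]
        refine Finset.sum_congr rfl fun b1 _ => ?_
        rw [Finset.sum_comm]
        refine Finset.sum_congr rfl fun b2 _ => ?_
        rw [Finset.sum_comm]
    _ = _ := by
        have hrow_ne : ∀ b1 b2 : Fin m, b1 ≠ b2 →
            (∑ b3, T b1 b2 b3)
              = (2 * Fintype.card Y ^ (m - 2)
                  + (m - 2) * Fintype.card Y ^ (m - 3)) • (1 : Matrix X X ℂ) := by
          intro b1 b2 h
          have hb1 : b1 ∈ Finset.univ.erase b2 :=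
            Finset.mem_erase.2 ⟨h, Finset.mem_univ _⟩
          rw [← Finset.sum_erase_add _ _ (Finset.mem_univ b2),
              ← Finset.sum_erase_add _ _ hb1, h121 b1 b2 h, h122 b1 b2 h]
          have hconst : ∀ b3 ∈ (Finset.univ.erase b2).erase b1,
              T b1 b2 b3 = Fintype.card Y ^ (m - 3) • (1 : Matrix X X ℂ) := by
            intro b3 hb3
            have h3 := Finset.mem_erase.1 hb3
            have h3' := Finset.mem_erase.1 h3.2
            exact h123 b1 b2 b3 h (Ne.symm h3.1) (Ne.symm h3'.1)
          rw [Finset.sum_congr rfl hconst, Finset.sum_const]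
          have hc : ((Finset.univ.erase b2).erase b1).card = m - 2 := by
            rw [Finset.card_erase_of_mem hb1,
              Finset.card_erase_of_mem (Finset.mem_univ b2), Finset.card_univ,
              Fintype.card_fin]
            omega
          rw [hc, smul_smul, ← add_smul, ← add_smul]
          congr 1
          ring
        have hrow_eq : ∀ b1 : Fin m,
            (∑ b3, T b1 b1 b3)
              = (Fintype.card Y ^ (m - 1)
                  + (m - 1) * Fintype.card Y ^ (m - 2)) • (1 : Matrix X X ℂ) := by
          intro b1
          rw [← Finset.sum_erase_add _ _ (Finset.mem_univ b1), h111 b1]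
          have hconst : ∀ b3 ∈ Finset.univ.erase b1,
              T b1 b1 b3 = Fintype.card Y ^ (m - 2) • (1 : Matrix X X ℂ) := by
            intro b3 hb3
            exact h112 b1 b3 (Ne.symm (Finset.mem_erase.1 hb3).1)
          rw [Finset.sum_congr rfl hconst, Finset.sum_const]
          have hc : (Finset.univ.erase b1).card = m - 1 := by
            rw [Finset.card_erase_of_mem (Finset.mem_univ b1), Finset.card_univ,
              Fintype.card_fin]
          rw [hc, smul_smul, ← add_smul]
          congr 1
          ring
        have hplane : ∀ b1 : Fin m,
            (∑ b2, ∑ b3, T b1 b2 b3)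
              = ((Fintype.card Y ^ (m - 1) + (m - 1) * Fintype.card Y ^ (m - 2))
                  + (m - 1) * (2 * Fintype.card Y ^ (m - 2)
                      + (m - 2) * Fintype.card Y ^ (m - 3)))
                • (1 : Matrix X X ℂ) := by
          intro b1
          rw [← Finset.sum_erase_add _ _ (Finset.mem_univ b1), hrow_eq b1]
          have hconst : ∀ b2 ∈ Finset.univ.erase b1,
              (∑ b3, T b1 b2 b3)
                = (2 * Fintype.card Y ^ (m - 2)
                    + (m - 2) * Fintype.card Y ^ (m - 3)) • (1 : Matrix X X ℂ) := by
            intro b2 hb2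
            exact hrow_ne b1 b2 (Ne.symm (Finset.mem_erase.1 hb2).1)
          rw [Finset.sum_congr rfl hconst, Finset.sum_const]
          have hc : (Finset.univ.erase b1).card = m - 1 := by
            rw [Finset.card_erase_of_mem (Finset.mem_univ b1), Finset.card_univ,
              Fintype.card_fin]
          rw [hc, smul_smul, ← add_smul]
          congr 1
          ring
        rw [Finset.sum_congr rfl fun b1 _ => hplane b1, Finset.sum_const,
          Finset.card_univ, Fintype.card_fin, smul_smul]
        have hN : m * ((Fintype.card Y ^ (m - 1)
              + (m - 1) * Fintype.card Y ^ (m - 2))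
              + (m - 1) * (2 * Fintype.card Y ^ (m - 2)
                  + (m - 2) * Fintype.card Y ^ (m - 3)))
            = m * Fintype.card Y ^ (m - 1)
              + 3 * m * (m - 1) * Fintype.card Y ^ (m - 2)
              + m * (m - 1) * (m - 2) * Fintype.card Y ^ (m - 3)
                  * (if 3 ≤ m then 1 else 0) := by
          split_ifs with h3
          · ring
          · have h2 : m - 2 = 0 := by omega
            rw [h2]
            ring
        rw [Nat.cast_smul_eq_nsmul, hN]
end
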